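/- arXiv:1305.6956 — 7 statements merged into one kernel-verified Lean document; each statement's English description precedes it below -/
import Mathlib

section
/- (Abstract form of Lemma 2.7) For every integer k ≥ 2 and every x ∈ M, if F(x) ∈ p^k • M then x ∈ p^{k-1} • M. -/
/-! Mazur's condition lets one divide `x` by `π` once `F x` is divisible by `π²`; since `F`
commutes with `π` and `π` is regular, `F (x / π) = F x / π`, which lowers both exponents by one,
and induction on the exponent finishes. -/

theorem exists_eq_pow_smul_of_map_eq_pow_succ_smul {R M : Type*} [Monoid R] [MulAction R M]
    {π : R} (hπ : IsSMulRegular M π) {F : M → M} (hF : ∀ x, F (π • x) = π • F x)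
    (hMazur : ∀ x, (∃ m, F x = π ^ 2 • m) → ∃ m, x = π • m) (k : ℕ) (x : M)
    (hx : ∃ m, F x = π ^ (k + 1) • m) : ∃ m, x = π ^ k • m := by
  induction k generalizing x with
  | zero => exact ⟨x, by rw [pow_zero, one_smul]⟩
  | succ k ih =>
    obtain ⟨m, hm⟩ := hx
    obtain ⟨y, rfl⟩ := hMazur x ⟨π ^ k • m, by rw [hm, smul_smul, ← pow_add, add_comm 2 k]⟩
    have hFy : F y = π ^ (k + 1) • m := hπ (by simp only [← hF, hm, smul_smul, ← pow_succ'])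
    obtain ⟨z, rfl⟩ := ih y ⟨m, hFy⟩
    exact ⟨z, by rw [smul_smul, ← pow_succ']⟩

theorem muOrdinary_lemma_2_7_general (p : ℕ) [Fact p.Prime] (k₀ : Type*) [Field k₀]
    (M : Type*) [AddCommGroup M] [Module (WittVector p k₀) M]
    (htf : ∀ x : M, (p : WittVector p k₀) • x = 0 → x = 0)
    (F : M → M)
    (hFp : ∀ x : M, F ((p : WittVector p k₀) • x) = (p : WittVector p k₀) • F x)
    (hMazur : ∀ x : M, (∃ m : M, F x = (p : WittVector p k₀) ^ 2 • m) →
      ∃ m : M, x = (p : WittVector p k₀) • m)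
    (k : ℕ) (x : M)
    (hx : ∃ m : M, F x = (p : WittVector p k₀) ^ k • m) :
    ∃ m : M, x = (p : WittVector p k₀) ^ (k - 1) • m := by
  cases k with
  | zero => exact ⟨x, by rw [Nat.zero_sub, pow_zero, one_smul]⟩
  | succ k =>
    exact exists_eq_pow_smul_of_map_eq_pow_succ_smul
      (IsSMulRegular.of_right_eq_zero_of_smul htf) hFp hMazur k x hx

/-- **Abstract form of Lemma 2.7.**
`W = W(k₀)` is the ring of `p`-typical Witt vectors over a perfect field `k₀` of
characteristic `p`, `M` is a `p`-torsion-free `W`-module, and `F : M → M` is an additive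
map commuting with multiplication by `p` and satisfying the Mazur-type condition
(`F x ∈ p² • M → x ∈ p • M`).  Then for every `k ≥ 2` and `x ∈ M`, if `F x ∈ p^k • M`
then `x ∈ p^(k-1) • M`. -/
theorem muOrdinary_lemma_2_7 (p : ℕ) [Fact p.Prime] (k₀ : Type*) [Field k₀] [CharP k₀ p]
    [PerfectRing k₀ p]
    (M : Type*) [AddCommGroup M] [Module (WittVector p k₀) M]
    (htf : ∀ x : M, (p : WittVector p k₀) • x = 0 → x = 0)
    (F : M → M)
    (hFadd : ∀ x y : M, F (x + y) = F x + F y)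
    (hFp : ∀ x : M, F ((p : WittVector p k₀) • x) = (p : WittVector p k₀) • F x)
    (hMazur : ∀ x : M, (∃ m : M, F x = (p : WittVector p k₀) ^ 2 • m) →
      ∃ m : M, x = (p : WittVector p k₀) • m)
    (k : ℕ) (hk : 2 ≤ k) (x : M)
    (hx : ∃ m : M, F x = (p : WittVector p k₀) ^ k • m) :
    ∃ m : M, x = (p : WittVector p k₀) ^ (k - 1) • m :=
  muOrdinary_lemma_2_7_general p k₀ M htf F hFp hMazur k x hx
end

section
/- (Abstract form of Corollary 2.8) For all integers j ≥ 2 and k ≥ 2 and every x ∈ M, if F^j(x) ∈ p^k • M then F^{j-1}(x) ∈ p^{k-1} • M, where F^j denotes the j-fold iterate of F. -/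
section MazurDescent

variable {R M : Type*} [Monoid R] [MulAction R M] {q : R} {F : M → M}

/-- Writing `F y = q ^ 2 • (q ^ (n + 1) • m)`, the Mazur condition gives `y = q • y'`; cancelling
`q` in `q • F y' = q • q ^ (n + 2) • m` lets the induction continue with `y'`. -/
theorem exists_eq_pow_succ_smul_of_apply_eq_pow_add_two_smul
    (hq : Function.Injective (q • · : M → M)) (hF : ∀ x, F (q • x) = q • F x)
    (hMazur : ∀ x, (∃ m, F x = q ^ 2 • m) → ∃ m, x = q • m) :
    ∀ (n : ℕ) (y m : M), F y = q ^ (n + 2) • m → ∃ m', y = q ^ (n + 1) • m' := by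
  intro n
  induction n with
  | zero =>
    intro y m hy
    simpa using hMazur y ⟨m, hy⟩
  | succ n ih =>
    intro y m hy
    obtain ⟨y', rfl⟩ := hMazur y ⟨q ^ (n + 1) • m, by rw [hy, smul_smul, ← pow_add]; ring_nf⟩
    have hFy' : F y' = q ^ (n + 2) • m := hq <| by
      simp only [← hF, hy, smul_smul, ← pow_succ']
    obtain ⟨m', rfl⟩ := ih y' m hFy'
    exact ⟨m', by rw [smul_smul, ← pow_succ']⟩

end MazurDescent

theorem muOrdinary_cor_2_8_general (p : ℕ) [Fact p.Prime] (k₀ : Type*) [Field k₀]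
    (M : Type*) [AddCommGroup M] [Module (WittVector p k₀) M]
    (htf : ∀ x : M, (p : WittVector p k₀) • x = 0 → x = 0)
    (F : M → M)
    (hFp : ∀ x : M, F ((p : WittVector p k₀) • x) = (p : WittVector p k₀) • F x)
    (hMazur : ∀ x : M, (∃ m : M, F x = (p : WittVector p k₀) ^ 2 • m) →
      ∃ m : M, x = (p : WittVector p k₀) • m)
    (j k : ℕ) (hj : 2 ≤ j) (hk : 2 ≤ k) (x : M)
    (hx : ∃ m : M, F^[j] x = (p : WittVector p k₀) ^ k • m) :
    ∃ m : M, F^[j - 1] x = (p : WittVector p k₀) ^ (k - 1) • m := by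
  have hp_inj : Function.Injective ((p : WittVector p k₀) • · : M → M) :=
    fun a b (hab : (p : WittVector p k₀) • a = (p : WittVector p k₀) • b) =>
      sub_eq_zero.mp (htf _ (by rw [smul_sub, hab, sub_self]))
  obtain ⟨i, rfl⟩ := Nat.exists_eq_add_of_le' hj
  obtain ⟨n, rfl⟩ := Nat.exists_eq_add_of_le' hk
  obtain ⟨m, hm⟩ := hx
  rw [Function.iterate_succ_apply'] at hm
  exact exists_eq_pow_succ_smul_of_apply_eq_pow_add_two_smul hp_inj hFp hMazur n _ m hm

/-- **Abstract form of Corollary 2.8.**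
For all `j ≥ 2`, `k ≥ 2` and `x ∈ M`, if `F^[j] x ∈ p^k • M` then
`F^[j-1] x ∈ p^(k-1) • M`. -/
theorem muOrdinary_cor_2_8 (p : ℕ) [Fact p.Prime] (k₀ : Type*) [Field k₀] [CharP k₀ p]
    [PerfectRing k₀ p]
    (M : Type*) [AddCommGroup M] [Module (WittVector p k₀) M]
    (htf : ∀ x : M, (p : WittVector p k₀) • x = 0 → x = 0)
    (F : M → M)
    (hFadd : ∀ x y : M, F (x + y) = F x + F y)
    (hFp : ∀ x : M, F ((p : WittVector p k₀) • x) = (p : WittVector p k₀) • F x)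
    (hMazur : ∀ x : M, (∃ m : M, F x = (p : WittVector p k₀) ^ 2 • m) →
      ∃ m : M, x = (p : WittVector p k₀) • m)
    (j k : ℕ) (hj : 2 ≤ j) (hk : 2 ≤ k) (x : M)
    (hx : ∃ m : M, F^[j] x = (p : WittVector p k₀) ^ k • m) :
    ∃ m : M, F^[j - 1] x = (p : WittVector p k₀) ^ (k - 1) • m :=
  muOrdinary_cor_2_8_general p k₀ M htf F hFp hMazur j k hj hk x hx
end

section
/- (Abstract form of Corollary 2.9) For every integer k ≥ 1 and every x ∈ M, if F^k(x) ∈ p^k • M then F(x) ∈ p • M (equivalently, the reduction of x modulo p lies in the reduction of F⁻¹(pM), i.e. in Fil¹). -/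
/-!
Iterating the Mazur condition (using that `F` commutes with `p` and `M` has no `p`-torsion)
gives `F z ∈ p^(n+1) M → z ∈ p^n M` for every `n ≥ 1`. Applied to `z = F^[k-1] x`, then to
`F^[k-2] x`, and so on, this peels one factor of `p` and one application of `F` off
`F^[k] x ∈ p^k M` at a time, down to `F x ∈ p M`.
-/

section MazurCondition

variable {R M : Type*} [Monoid R] [MulAction R M] {q : R} {F : M → M}

theorem exists_eq_pow_smul_of_apply_eq_pow_succ_smul (hq : IsSMulRegular M q)
    (hF : ∀ x, F (q • x) = q • F x)
    (hMazur : ∀ x, (∃ m, F x = q ^ 2 • m) → ∃ m, x = q • m)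
    {n : ℕ} (hn : 1 ≤ n) {z : M} (hz : ∃ m, F z = q ^ (n + 1) • m) :
    ∃ w, z = q ^ n • w := by
  induction n, hn using Nat.le_induction generalizing z with
  | base => simpa using hMazur z hz
  | succ n hn ih =>
    obtain ⟨m, hm⟩ := hz
    obtain ⟨w, rfl⟩ : ∃ w, z = q • w :=
      hMazur z ⟨q ^ n • m, by rw [hm, smul_smul, ← pow_add, add_comm 2 n]⟩
    have hFw : F w = q ^ (n + 1) • m := hq <| show q • F w = q • (q ^ (n + 1) • m) by rw [← hF, hm, smul_smul, ← pow_succ']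
    obtain ⟨w', rfl⟩ := ih ⟨m, hFw⟩
    exact ⟨w', by rw [smul_smul, ← pow_succ']⟩

theorem exists_apply_eq_smul_of_iterate_eq_pow_smul (hq : IsSMulRegular M q)
    (hF : ∀ x, F (q • x) = q • F x)
    (hMazur : ∀ x, (∃ m, F x = q ^ 2 • m) → ∃ m, x = q • m)
    {k : ℕ} (hk : 1 ≤ k) {x : M} (hx : ∃ m, F^[k] x = q ^ k • m) :
    ∃ m, F x = q • m := by
  induction k, hk using Nat.le_induction with
  | base => simpa using hx
  | succ k hk ih =>
    rw [Function.iterate_succ_apply'] at hx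
    exact ih (exists_eq_pow_smul_of_apply_eq_pow_succ_smul hq hF hMazur hk hx)

end MazurCondition

theorem muOrdinary_cor_2_9_general (p : ℕ) [Fact p.Prime] (k₀ : Type*) [Field k₀]
    (M : Type*) [AddCommGroup M] [Module (WittVector p k₀) M]
    (htf : ∀ x : M, (p : WittVector p k₀) • x = 0 → x = 0)
    (F : M → M)
    (hFp : ∀ x : M, F ((p : WittVector p k₀) • x) = (p : WittVector p k₀) • F x)
    (hMazur : ∀ x : M, (∃ m : M, F x = (p : WittVector p k₀) ^ 2 • m) →
      ∃ m : M, x = (p : WittVector p k₀) • m)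
    (k : ℕ) (hk : 1 ≤ k) (x : M)
    (hx : ∃ m : M, F^[k] x = (p : WittVector p k₀) ^ k • m) :
    ∃ m : M, F x = (p : WittVector p k₀) • m :=
  exists_apply_eq_smul_of_iterate_eq_pow_smul (.of_right_eq_zero_of_smul htf) hFp hMazur hk hx

/-- **Abstract form of Corollary 2.9.**
For every `k ≥ 1` and `x ∈ M`, if `F^[k] x ∈ p^k • M` then `F x ∈ p • M`
(i.e. the reduction of `x` modulo `p` lies in `Fil¹`). -/
theorem muOrdinary_cor_2_9 (p : ℕ) [Fact p.Prime] (k₀ : Type*) [Field k₀] [CharP k₀ p]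
    [PerfectRing k₀ p]
    (M : Type*) [AddCommGroup M] [Module (WittVector p k₀) M]
    (htf : ∀ x : M, (p : WittVector p k₀) • x = 0 → x = 0)
    (F : M → M)
    (hFadd : ∀ x y : M, F (x + y) = F x + F y)
    (hFp : ∀ x : M, F ((p : WittVector p k₀) • x) = (p : WittVector p k₀) • F x)
    (hMazur : ∀ x : M, (∃ m : M, F x = (p : WittVector p k₀) ^ 2 • m) →
      ∃ m : M, x = (p : WittVector p k₀) • m)
    (k : ℕ) (hk : 1 ≤ k) (x : M)
    (hx : ∃ m : M, F^[k] x = (p : WittVector p k₀) ^ k • m) :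
    ∃ m : M, F x = (p : WittVector p k₀) • m :=
  muOrdinary_cor_2_9_general p k₀ M htf F hFp hMazur k hk x hx
end

section
/- (Iterated exponent-subtraction, used in the proof of Lemma 2.11) For all integers j ≥ 2 and k ≥ 2, every integer t with 0 ≤ t ≤ min(j, k) − 1, and every x ∈ M: if F^j(x) ∈ p^k • M then F^{j-t}(x) ∈ p^{k-t} • M. -/
/-! Writing `F y ∈ p^c M` with `c ≥ 3`, Mazur's condition gives `y = p w`; since `F` commutes
with `p` and `p` is a non-zero-divisor on `M`, this leaves `F w ∈ p^(c-1) M`. Inducting on `c`,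
`F y ∈ p^c M` with `c ≥ 2` forces `y ∈ p^(c-1) M`, i.e. one application of `F` can be peeled
off at the cost of one power of `p`; doing this `t` times gives the theorem. -/

section

variable {R M : Type*} [Monoid R] [MulAction R M] {q : R} {F : M → M}

theorem exists_eq_pow_pred_smul_of_apply_eq_pow_smul (hq : IsSMulRegular M q)
    (hFq : ∀ x : M, F (q • x) = q • F x)
    (hMazur : ∀ x : M, (∃ m : M, F x = q ^ 2 • m) → ∃ m : M, x = q • m)
    {c : ℕ} (hc : 2 ≤ c) {y : M} (hy : ∃ m : M, F y = q ^ c • m) :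
    ∃ m : M, y = q ^ (c - 1) • m := by
  induction c, hc using Nat.le_induction generalizing y with
  | base => simpa using hMazur y hy
  | succ c hc ih =>
    obtain ⟨m, hm⟩ := hy
    obtain ⟨w, rfl⟩ : ∃ w : M, y = q • w := hMazur y
      ⟨q ^ (c - 1) • m, by rw [hm, smul_smul, ← pow_add]; congr 2; omega⟩
    have hFw : F w = q ^ c • m := hq <| by
      simp only [← hFq, hm, pow_succ', mul_smul]
    obtain ⟨m', rfl⟩ := ih ⟨m, hFw⟩
    refine ⟨m', ?_⟩
    rw [smul_smul, ← pow_succ', Nat.sub_add_cancel (by omega : 1 ≤ c), Nat.add_sub_cancel]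

theorem exists_iterate_sub_eq_pow_sub_smul (hq : IsSMulRegular M q)
    (hFq : ∀ x : M, F (q • x) = q • F x)
    (hMazur : ∀ x : M, (∃ m : M, F x = q ^ 2 • m) → ∃ m : M, x = q • m)
    {j k t : ℕ} (ht : t ≤ min j k - 1) {x : M} (hx : ∃ m : M, F^[j] x = q ^ k • m) :
    ∃ m : M, F^[j - t] x = q ^ (k - t) • m := by
  induction t with
  | zero => simpa using hx
  | succ t ih =>
    obtain ⟨m, hm⟩ := ih (by omega)
    rw [show j - t = j - (t + 1) + 1 by omega, Function.iterate_succ_apply'] at hm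
    obtain ⟨m', hm'⟩ :=
      exists_eq_pow_pred_smul_of_apply_eq_pow_smul hq hFq hMazur (by omega : 2 ≤ k - t) ⟨m, hm⟩
    exact ⟨m', by rw [hm', Nat.sub_sub]⟩

end

theorem muOrdinary_iterated_subtraction_general (p : ℕ) [Fact p.Prime] (k₀ : Type*) [Field k₀]
    (M : Type*) [AddCommGroup M] [Module (WittVector p k₀) M]
    (htf : ∀ x : M, (p : WittVector p k₀) • x = 0 → x = 0)
    (F : M → M)
    (hFp : ∀ x : M, F ((p : WittVector p k₀) • x) = (p : WittVector p k₀) • F x)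
    (hMazur : ∀ x : M, (∃ m : M, F x = (p : WittVector p k₀) ^ 2 • m) →
      ∃ m : M, x = (p : WittVector p k₀) • m)
    (j k t : ℕ) (ht : t ≤ min j k - 1) (x : M)
    (hx : ∃ m : M, F^[j] x = (p : WittVector p k₀) ^ k • m) :
    ∃ m : M, F^[j - t] x = (p : WittVector p k₀) ^ (k - t) • m :=
  exists_iterate_sub_eq_pow_sub_smul (.of_right_eq_zero_of_smul htf) hFp hMazur ht hx

/-- **Iterated exponent-subtraction (used in the proof of Lemma 2.11).**
For all `j ≥ 2`, `k ≥ 2`, every `t` with `0 ≤ t ≤ min j k - 1` and every `x ∈ M`: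
if `F^[j] x ∈ p^k • M` then `F^[j-t] x ∈ p^(k-t) • M`. -/
theorem muOrdinary_iterated_subtraction (p : ℕ) [Fact p.Prime] (k₀ : Type*) [Field k₀]
    [CharP k₀ p] [PerfectRing k₀ p]
    (M : Type*) [AddCommGroup M] [Module (WittVector p k₀) M]
    (htf : ∀ x : M, (p : WittVector p k₀) • x = 0 → x = 0)
    (F : M → M)
    (hFadd : ∀ x y : M, F (x + y) = F x + F y)
    (hFp : ∀ x : M, F ((p : WittVector p k₀) • x) = (p : WittVector p k₀) • F x)
    (hMazur : ∀ x : M, (∃ m : M, F x = (p : WittVector p k₀) ^ 2 • m) →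
      ∃ m : M, x = (p : WittVector p k₀) • m)
    (j k t : ℕ) (hj : 2 ≤ j) (hk : 2 ≤ k) (ht : t ≤ min j k - 1) (x : M)
    (hx : ∃ m : M, F^[j] x = (p : WittVector p k₀) ^ k • m) :
    ∃ m : M, F^[j - t] x = (p : WittVector p k₀) ^ (k - t) • m :=
  muOrdinary_iterated_subtraction_general p k₀ M htf F hFp hMazur j k t ht x hx
end

section
/- (Abstract form of Lemma 2.5) Let s ≥ 1 and let λ₁ < λ₂ < … < λ_s be natural numbers. For i ∈ {1, 2}, let M_i be a finite free W-module equipped with an additive σ-semilinear map Φ_i : M_i → M_i and an internal direct sum decomposition M_i = M_{i,1} ⊕ … ⊕ M_{i,s} such that each M_{i,j} is Φ_i-stable and (M_{i,j}, Φ_i|_{M_{i,j}}) is isoclinic of slope λ_j. Then every W-linear map φ : M_1 → M_2 satisfying φ ∘ Φ_1 = Φ_2 ∘ φ (in particular, every isogeny of such F-crystals) satisfies φ(M_{1,j}) ⊆ M_{2,j} for every j. -/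
/-!
Composing `φ` with the projection of `M₂` onto its `k`-th summand gives a map `ψ` from the
slope-`a` piece `N₁ⱼ` (where `Φ₁ = pᵃ β₁`) to the slope-`b` piece `N₂ₖ` (where `Φ₂ = pᵇ β₂`)
intertwining `Φ₁` and `Φ₂`. If `a ≠ b`, induction on `n` shows that all values of `ψ` lie in
`pⁿ N₂ₖ`, so they vanish because `M₂` is `p`-adically separated. For `a < b`, write
`x = β₁ x'`: then `pᵃ ψ x = Φ₂ (ψ x') ∈ pᵇ⁺ⁿ N₂ₖ`. For `a > b`,
`pᵇ β₂ (ψ x) = Φ₂ (ψ x) = pᵃ ψ (β₁ x) ∈ pᵃ⁺ⁿ N₂ₖ`. In both cases `pᵃ` resp. `pᵇ` is cancelled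
by torsion-freeness of `M₂` (and `β₂` is inverted by bijectivity).
-/

/-- A submodule `N` of `M` is *isoclinic of slope `lam`* for the additive `σ`-semilinear
map `Φ : M → M` (in particular `Φ`-stable) if the restriction of `Φ` to `N` equals
`pW ^ lam • b` for some `σ`-semilinear additive bijection `b : N → N`. -/
def IsoclinicOn {W M : Type*} [CommRing W] [AddCommGroup M] [Module W M]
    (σ : W ≃+* W) (pW : W) (lam : ℕ) (Φ : M → M) (N : Submodule W M) : Prop :=
  ∃ b : N → N, Function.Bijective b ∧ (∀ x y : N, b (x + y) = b x + b y) ∧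
    (∀ (w : W) (x : N), b (w • x) = σ w • b x) ∧ ∀ x : N, Φ (x : M) = pW ^ lam • (b x : M)

namespace DirectSum

variable {ι M S : Type*} [DecidableEq ι] [AddCommMonoid M] [SetLike S M]
  [AddSubmonoidClass S M] (ℳ : ι → S) [Decomposition ℳ]

lemma mem_of_decompose_apply_eq_zero {x : M} {j : ι} (h : ∀ k ≠ j, decompose ℳ x k = 0) :
    x ∈ ℳ j := by
  have hx : decompose ℳ x = of (fun i ↦ ℳ i) j (decompose ℳ x j) := by
    ext k
    obtain rfl | hk := eq_or_ne k j
    · rw [of_eq_same]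
    · rw [of_eq_of_ne _ _ _ hk, h k hk]
  rw [← (decompose ℳ).symm_apply_apply x, hx, decompose_symm_of]
  exact SetLike.coe_mem _

lemma coe_decompose_map_apply (f : M →+ M) (hf : ∀ i, Set.MapsTo f (ℳ i) (ℳ i)) (x : M) (k : ι) :
    (decompose ℳ (f x) k : M) = f (decompose ℳ x k) := by
  induction x using Decomposition.inductionOn ℳ with
  | zero => simp
  | @homogeneous i m =>
    obtain rfl | hik := eq_or_ne i k
    · rw [decompose_of_mem_same ℳ (hf i m.2), decompose_coe, of_eq_same]
    · rw [decompose_of_mem_ne ℳ (hf i m.2) hik, decompose_coe, of_eq_of_ne _ _ _ hik.symm,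
        ZeroMemClass.coe_zero, map_zero]
  | add m m' hm hm' => simp only [map_add, decompose_add, add_apply, AddMemClass.coe_add, hm, hm']

end DirectSum

lemma IsHausdorff.eq_zero_of_forall_exists_eq_pow_smul {R M : Type*} [CommRing R]
    [AddCommGroup M] [Module R M] {p : R} [IsHausdorff (Ideal.span {p}) M] {v : M}
    (h : ∀ n : ℕ, ∃ z : M, v = p ^ n • z) : v = 0 :=
  IsHausdorff.haus ‹_› v fun n ↦ by
    obtain ⟨z, rfl⟩ := h n
    rw [SModEq.zero, Ideal.span_singleton_pow]
    exact Submodule.smul_mem_smul (Ideal.mem_span_singleton_self _) Submodule.mem_top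

namespace IsoclinicOn

variable {W M M' : Type*} [CommRing W] [AddCommGroup M] [Module W M] [AddCommGroup M']
  [Module W M'] {σ : W ≃+* W} {p : W} {a b : ℕ} {Φ : M → M} {Φ' : M' → M'}
  {N : Submodule W M} {N' : Submodule W M'}

lemma mapsTo (h : IsoclinicOn σ p a Φ N) : Set.MapsTo Φ N N := by
  intro x hx
  obtain ⟨β, -, -, -, hΦ⟩ := h
  rw [hΦ ⟨x, hx⟩]
  exact N.smul_mem _ (β _).2

lemma exists_bijective_pow_smul (hσ : σ p = p) (h : IsoclinicOn σ p a Φ N) :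
    ∃ β : N → N, β.Bijective ∧ (∀ (m : ℕ) (x : N), β (p ^ m • x) = p ^ m • β x) ∧
      ∀ x : N, Φ x = p ^ a • (β x : M) := by
  obtain ⟨β, hβ, -, hβsemi, hΦ⟩ := h
  exact ⟨β, hβ, fun m x ↦ by rw [hβsemi, map_pow, hσ], hΦ⟩

variable (hσ : σ p = p) (hN : IsoclinicOn σ p a Φ N) (hN' : IsoclinicOn σ p b Φ' N')
  (hreg : IsSMulRegular M' p) (ψ : M →ₗ[W] M') (hψN : Set.MapsTo ψ N N')
  (hψΦ : ∀ x ∈ N, ψ (Φ x) = Φ' (ψ x))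
include hσ hN hN' hreg hψN hψΦ

lemma exists_apply_eq_pow_smul_of_lt (hab : a < b) (n : ℕ) :
    ∀ x ∈ N, ∃ z ∈ N', ψ x = p ^ n • z := by
  obtain ⟨c, rfl⟩ : ∃ c, b = a + c + 1 := ⟨b - a - 1, by omega⟩
  obtain ⟨β, hβ, -, hΦ⟩ := hN.exists_bijective_pow_smul hσ
  obtain ⟨β', -, hβ'p, hΦ'⟩ := hN'.exists_bijective_pow_smul hσ
  induction n with
  | zero => exact fun x hx ↦ ⟨ψ x, hψN hx, by rw [pow_zero, one_smul]⟩
  | succ n ih =>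
    intro x hx
    obtain ⟨x', hx'⟩ := hβ.surjective ⟨x, hx⟩
    obtain ⟨z, hz, hψx'⟩ := ih x' x'.2
    refine ⟨p ^ c • (β' ⟨z, hz⟩ : M'), N'.smul_mem _ (β' _).2, hreg.pow a ?_⟩
    have hΦ'z := hΦ' (p ^ n • ⟨z, hz⟩)
    rw [hβ'p, Submodule.coe_smul, Submodule.coe_smul] at hΦ'z
    calc p ^ a • ψ x = ψ (Φ x') := by rw [hΦ, hx', map_smul]
      _ = Φ' (p ^ n • z) := by rw [hψΦ _ x'.2, hψx']
      _ = p ^ a • p ^ (n + 1) • p ^ c • (β' ⟨z, hz⟩ : M') := by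
        rw [hΦ'z, smul_smul, smul_smul, smul_smul, ← pow_add, ← pow_add, ← pow_add]
        ring_nf

lemma exists_apply_eq_pow_smul_of_gt (hab : b < a) (n : ℕ) :
    ∀ x ∈ N, ∃ z ∈ N', ψ x = p ^ n • z := by
  obtain ⟨c, rfl⟩ : ∃ c, a = b + c + 1 := ⟨a - b - 1, by omega⟩
  obtain ⟨β, -, -, hΦ⟩ := hN.exists_bijective_pow_smul hσ
  obtain ⟨β', hβ', hβ'p, hΦ'⟩ := hN'.exists_bijective_pow_smul hσ
  induction n with
  | zero => exact fun x hx ↦ ⟨ψ x, hψN hx, by rw [pow_zero, one_smul]⟩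
  | succ n ih =>
    intro x hx
    obtain ⟨z, hz, hψβx⟩ := ih _ (β ⟨x, hx⟩).2
    obtain ⟨z', hz'⟩ := hβ'.surjective ⟨z, hz⟩
    have hβ'ψ : β' ⟨ψ x, hψN hx⟩ = β' (p ^ (n + 1 + c) • z') := by
      rw [hβ'p, hz']
      ext
      rw [Submodule.coe_smul]
      refine hreg.pow b ?_
      calc p ^ b • (β' ⟨ψ x, hψN hx⟩ : M') = ψ (Φ x) := by rw [← hΦ', hψΦ x hx]
        _ = p ^ b • (p ^ (n + 1 + c) • z) := by
          rw [hΦ ⟨x, hx⟩, map_smul, hψβx, smul_smul, smul_smul, ← pow_add, ← pow_add]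
          ring_nf
    refine ⟨p ^ c • (z' : M'), N'.smul_mem _ z'.2, ?_⟩
    rw [smul_smul, ← pow_add, ← Submodule.coe_smul, ← hβ'.injective hβ'ψ]

lemma apply_eq_zero_of_ne [IsHausdorff (Ideal.span {p}) M'] (hab : a ≠ b) {x : M} (hx : x ∈ N) :
    ψ x = 0 :=
  IsHausdorff.eq_zero_of_forall_exists_eq_pow_smul fun n ↦ by
    obtain ⟨z, -, hz⟩ := hab.lt_or_gt.elim
      (fun h ↦ exists_apply_eq_pow_smul_of_lt hσ hN hN' hreg ψ hψN hψΦ h n x hx)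
      (fun h ↦ exists_apply_eq_pow_smul_of_gt hσ hN hN' hreg ψ hψN hψΦ h n x hx)
    exact ⟨z, hz⟩

end IsoclinicOn

theorem muOrdinary_lemma_2_5_general (p : ℕ) [Fact p.Prime] (k₀ : Type*) [Field k₀] [CharP k₀ p]
    [PerfectRing k₀ p]
    (σ : WittVector p k₀ ≃+* WittVector p k₀)
    (s : ℕ) (lam : Fin s → ℕ) (hlam : StrictMono lam)
    (M₁ M₂ : Type*) [AddCommGroup M₁] [Module (WittVector p k₀) M₁]
    [AddCommGroup M₂] [Module (WittVector p k₀) M₂]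
    [Module.Free (WittVector p k₀) M₂] [Module.Finite (WittVector p k₀) M₂]
    (Φ₁ : M₁ → M₁) (Φ₂ : M₂ → M₂)
    (hΦ₂add : ∀ x y : M₂, Φ₂ (x + y) = Φ₂ x + Φ₂ y)
    (N₁ : Fin s → Submodule (WittVector p k₀) M₁)
    (N₂ : Fin s → Submodule (WittVector p k₀) M₂)
    (hN₂ : DirectSum.IsInternal N₂)
    (hiso₁ : ∀ j : Fin s, IsoclinicOn σ (p : WittVector p k₀) (lam j) Φ₁ (N₁ j))
    (hiso₂ : ∀ j : Fin s, IsoclinicOn σ (p : WittVector p k₀) (lam j) Φ₂ (N₂ j))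
    (φ : M₁ →ₗ[WittVector p k₀] M₂) (hφ : ∀ x : M₁, φ (Φ₁ x) = Φ₂ (φ x)) :
    ∀ j : Fin s, (N₁ j).map φ ≤ N₂ j := by
  intro j
  let := hN₂.chooseDecomposition
  have hirr := WittVector.irreducible p (k := k₀)
  have hreg : IsSMulRegular M₂ (p : WittVector p k₀) :=
    (IsRegular.of_ne_zero hirr.ne_zero).isSMulRegular
  have : IsHausdorff (Ideal.span {(p : WittVector p k₀)}) M₂ :=
    .of_isLocalRing _ _ (by rw [Ne, Ideal.span_singleton_eq_top]; exact hirr.not_isUnit)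
  rintro _ ⟨x, hx, rfl⟩
  refine DirectSum.mem_of_decompose_apply_eq_zero N₂ fun k hk ↦ Subtype.ext ?_
  let π : M₂ →ₗ[WittVector p k₀] M₂ := (N₂ k).subtype ∘ₗ
    DirectSum.component _ _ (fun i ↦ N₂ i) k ∘ₗ (DirectSum.decomposeLinearEquiv N₂).toLinearMap
  have hπΦ : ∀ y, π (Φ₂ y) = Φ₂ (π y) := fun y ↦
    DirectSum.coe_decompose_map_apply N₂ (.mk' Φ₂ hΦ₂add) (fun i ↦ (hiso₂ i).mapsTo) y k
  exact (hiso₁ j).apply_eq_zero_of_ne (map_natCast σ p) (hiso₂ k) hreg (π ∘ₗ φ)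
    (fun y _ ↦ (DirectSum.decompose N₂ (φ y) k).2)
    (fun y _ ↦ by simp only [LinearMap.comp_apply, hφ, hπΦ])
    (hlam.injective.ne hk.symm) hx

/-- **Abstract form of Lemma 2.5.**
Over `W = W(k₀)`, with `σ` a fixed power of the Witt-vector Frobenius automorphism:
let `s ≥ 1` and `λ₁ < … < λ_s` be natural numbers, and for `i ∈ {1, 2}` let `Mᵢ` be a
finite free `W`-module with an additive `σ`-semilinear map `Φᵢ` and an internal direct
sum decomposition `Mᵢ = ⊕ⱼ Mᵢⱼ` into `Φᵢ`-stable submodules with `(Mᵢⱼ, Φᵢ)` isoclinic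
of slope `λⱼ`.  Then every `W`-linear map `φ : M₁ → M₂` with `φ ∘ Φ₁ = Φ₂ ∘ φ`
(in particular, every isogeny) satisfies `φ (M₁ⱼ) ⊆ M₂ⱼ` for every `j`. -/
theorem muOrdinary_lemma_2_5 (p : ℕ) [Fact p.Prime] (k₀ : Type*) [Field k₀] [CharP k₀ p]
    [PerfectRing k₀ p]
    (σ : WittVector p k₀ ≃+* WittVector p k₀)
    (hσ : ∃ t : ℕ, σ = (WittVector.frobeniusEquiv p k₀) ^ t)
    (s : ℕ) (hs : 1 ≤ s) (lam : Fin s → ℕ) (hlam : StrictMono lam)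
    (M₁ M₂ : Type*) [AddCommGroup M₁] [Module (WittVector p k₀) M₁]
    [Module.Free (WittVector p k₀) M₁] [Module.Finite (WittVector p k₀) M₁]
    [AddCommGroup M₂] [Module (WittVector p k₀) M₂]
    [Module.Free (WittVector p k₀) M₂] [Module.Finite (WittVector p k₀) M₂]
    (Φ₁ : M₁ → M₁) (Φ₂ : M₂ → M₂)
    (hΦ₁add : ∀ x y : M₁, Φ₁ (x + y) = Φ₁ x + Φ₁ y)
    (hΦ₁semi : ∀ (w : WittVector p k₀) (x : M₁), Φ₁ (w • x) = σ w • Φ₁ x)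
    (hΦ₂add : ∀ x y : M₂, Φ₂ (x + y) = Φ₂ x + Φ₂ y)
    (hΦ₂semi : ∀ (w : WittVector p k₀) (x : M₂), Φ₂ (w • x) = σ w • Φ₂ x)
    (N₁ : Fin s → Submodule (WittVector p k₀) M₁)
    (N₂ : Fin s → Submodule (WittVector p k₀) M₂)
    (hN₁ : DirectSum.IsInternal N₁) (hN₂ : DirectSum.IsInternal N₂)
    (hiso₁ : ∀ j : Fin s, IsoclinicOn σ (p : WittVector p k₀) (lam j) Φ₁ (N₁ j))
    (hiso₂ : ∀ j : Fin s, IsoclinicOn σ (p : WittVector p k₀) (lam j) Φ₂ (N₂ j))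
    (φ : M₁ →ₗ[WittVector p k₀] M₂) (hφ : ∀ x : M₁, φ (Φ₁ x) = Φ₂ (φ x)) :
    ∀ j : Fin s, (N₁ j).map φ ≤ N₂ j :=
  muOrdinary_lemma_2_5_general p k₀ σ s lam hlam M₁ M₂ Φ₁ Φ₂ hΦ₂add N₁ N₂ hN₂ hiso₁ hiso₂ φ hφ
end

section
/- (Diagonal form of F^e on Moonen's standard μ-ordinary module, Appendix A) For every x ∈ M, every i ∈ ℤ/eℤ and every j ∈ {1, …, n}, one has (F^e x)(i, j) = p^{a_j} · σ^e(x(i, j)), where a_j = card{ i' ∈ ℤ/eℤ : f(i') > n − j }. In other words, F^e preserves each slot i and acts there as the diagonal matrix diag(p^{a_1}, …, p^{a_n}) composed with σ^e. -/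
/-- The Frobenius `F` of Moonen's standard μ-ordinary Dieudonné module.
The module is `M = (ℤ/eℤ × {1, …, n}) → W(k₀)` (the index `j ∈ {1, …, n}` is encoded by
`j : Fin n`, representing `j.val + 1`), and `F` is the additive `σ`-semilinear map given
by `(F x)(i, j) = c(i−1, j) · σ(x(i−1, j))`, where `c(i, j) = p` if `f(i) > n − j` and
`c(i, j) = 1` otherwise; here `σ` is the Witt-vector Frobenius automorphism. -/
noncomputable def moonenFrobenius (p : ℕ) [Fact p.Prime] (k₀ : Type*) [Field k₀]
    [CharP k₀ p] [PerfectRing k₀ p] (e n : ℕ) [NeZero e] (f : ZMod e → ℕ) :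
    ((ZMod e × Fin n) → WittVector p k₀) → ((ZMod e × Fin n) → WittVector p k₀) :=
  fun x ij =>
    (if n < f (ij.1 - 1) + (ij.2.val + 1) then (p : WittVector p k₀) else 1) *
      WittVector.frobeniusEquiv p k₀ (x (ij.1 - 1, ij.2))

/-!
`F` carries slot `i - 1` to slot `i`, multiplying by the coefficient of slot `i - 1`, so `F^e`
brings each slot back to itself after one full turn around `ℤ/eℤ`, having picked up the
coefficient of every slot exactly once. These coefficients are `1` or `p`, hence fixed by `σ`,
so they pass through the Frobenius twists and multiply to `p ^ a_j`.
-/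

theorem ZMod.prod_range_natCast {M : Type*} [CommMonoid M] (e : ℕ) [NeZero e] (g : ZMod e → M) :
    ∏ k ∈ Finset.range e, g k = ∏ a : ZMod e, g a :=
  Finset.prod_nbij' (↑) ZMod.val (by simp) (by simp [ZMod.val_lt])
    (fun k hk => ZMod.val_cast_of_lt (Finset.mem_range.mp hk)) (fun a _ => ZMod.natCast_zmod_val a)
    (fun _ _ => rfl)

theorem sub_one_iterate_apply {G : Type*} [AddCommGroupWithOne G] (k : ℕ) (a : G) :
    (· - 1)^[k] a = a - k := by
  induction k with
  | zero => simp
  | succ k ih => rw [Function.iterate_succ_apply', ih, Nat.cast_succ, sub_sub]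

section WeightedShift

variable {ι R F : Type*} [CommSemiring R] [FunLike F R R] [RingHomClass F R R]

def weightedShift (σ : F) (c : ι → R) (s : ι → ι) (x : ι → R) : ι → R :=
  fun a => c a * σ (x (s a))

theorem weightedShift_iterate_apply (σ : F) (c : ι → R) (s : ι → ι) (hc : ∀ a, σ (c a) = c a)
    (m : ℕ) (x : ι → R) (a : ι) :
    (weightedShift σ c s)^[m] x a = (∏ k ∈ Finset.range m, c (s^[k] a)) * σ^[m] (x (s^[m] a)) := by
  induction m generalizing a with
  | zero => simp
  | succ m ih =>
    rw [Function.iterate_succ_apply', weightedShift, ih, map_mul, map_prod, Finset.prod_range_succ',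
      Function.iterate_succ_apply' σ, Function.iterate_succ_apply s]
    simp only [hc, Function.iterate_succ_apply, Function.iterate_zero_apply]
    ring

end WeightedShift

theorem moonenFrobenius_eq_weightedShift (p : ℕ) [Fact p.Prime] (k₀ : Type*) [Field k₀]
    [CharP k₀ p] [PerfectRing k₀ p] (e n : ℕ) [NeZero e] (f : ZMod e → ℕ) :
    moonenFrobenius p k₀ e n f =
      weightedShift (WittVector.frobeniusEquiv p k₀)
        (fun ij => if n < f (ij.1 - 1) + (ij.2.val + 1) then (p : WittVector p k₀) else 1)
        (Prod.map (· - 1) id) :=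
  rfl

theorem muOrdinary_appendixA_diagonal_general (p : ℕ) [Fact p.Prime] (k₀ : Type*) [Field k₀]
    [CharP k₀ p] [PerfectRing k₀ p]
    (e n : ℕ) [NeZero e] (f : ZMod e → ℕ)
    (x : (ZMod e × Fin n) → WittVector p k₀) (i : ZMod e) (j : Fin n) :
    (moonenFrobenius p k₀ e n f)^[e] x (i, j) =
      (p : WittVector p k₀) ^
          (Finset.univ.filter fun i' : ZMod e => n < f i' + (j.val + 1)).card *
        (⇑(WittVector.frobeniusEquiv p k₀))^[e] (x (i, j)) := by
  set g : ZMod e → WittVector p k₀ := fun i' => if n < f i' + (j.val + 1) then (p : _) else 1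
  rw [moonenFrobenius_eq_weightedShift, weightedShift_iterate_apply, Prod.map_iterate,
    Prod.map_apply, sub_one_iterate_apply, ZMod.natCast_self, sub_zero, Function.iterate_id, id]
  congr 1
  calc _ = ∏ k ∈ Finset.range e, g (i - 1 - k) := Finset.prod_congr rfl fun k _ => by
          simp only [g, Prod.map_iterate, Prod.map_apply, sub_one_iterate_apply,
            Function.iterate_id, id, sub_right_comm]
    _ = ∏ a : ZMod e, g (i - 1 - a) := ZMod.prod_range_natCast e fun a => g (i - 1 - a)
    _ = ∏ a : ZMod e, g a := (Equiv.subLeft (i - 1)).prod_comp g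
    _ = _ := by rw [Finset.prod_ite, Finset.prod_const_one, mul_one, Finset.prod_const]
  · intro ij
    split_ifs <;> simp

/-- **Diagonal form of `F^e` on Moonen's standard μ-ordinary module (Appendix A).**
For every `x ∈ M`, every `i ∈ ℤ/eℤ` and every `j ∈ {1, …, n}` one has
`(F^e x)(i, j) = p^(a_j) · σ^e(x(i, j))`, where
`a_j = card { i' ∈ ℤ/eℤ : f(i') > n − j }`; i.e. `F^e` preserves each slot `i` and acts
there as `diag(p^(a_1), …, p^(a_n))` composed with `σ^e`. -/
theorem muOrdinary_appendixA_diagonal (p : ℕ) [Fact p.Prime] (k₀ : Type*) [Field k₀]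
    [CharP k₀ p] [PerfectRing k₀ p]
    (e n : ℕ) [NeZero e] (hn : 1 ≤ n) (f : ZMod e → ℕ) (hf : ∀ i : ZMod e, f i ≤ n)
    (x : (ZMod e × Fin n) → WittVector p k₀) (i : ZMod e) (j : Fin n) :
    (moonenFrobenius p k₀ e n f)^[e] x (i, j) =
      (p : WittVector p k₀) ^
          (Finset.univ.filter fun i' : ZMod e => n < f i' + (j.val + 1)).card *
        (⇑(WittVector.frobeniusEquiv p k₀))^[e] (x (i, j)) :=
  muOrdinary_appendixA_diagonal_general p k₀ e n f x i j
end

section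
/- (Combinatorial content of Proposition B.3 and Corollary B.4: the μ-ordinary locus is the maximal p-rank stratum, of p-rank 2ar) Let λ_1 ≤ λ_2 ≤ … ≤ λ_{2g} be a nondecreasing sequence of nonnegative rational numbers that is symmetric and lies on or above ν. Then card{ i : λ_i = 0 } ≤ 2ar; and if card{ i : λ_i = 0 } = 2ar, then λ_i = ν_i for all i. -/
/-!
Since `λ` is monotone and nonnegative, its zeros form an initial segment of length `k`, the
`p`-rank. If `k > 2ar`, the partial sums of `λ` up to `k` vanish while those of `ν` do not, as
`ν_{2ar+1} > 0`. If `k = 2ar` and `λ_j < 1/2` for some `j` in the block where `ν = 1/2`, then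
`λ ≤ ν` on `[1, j]` with strict inequality at `j`, so `λ` does not lie above `ν`. Hence `λ ≥ 1/2`
on that block, which is stable under `i ↦ 2g + 1 − i`, and symmetry gives `λ = 1/2` there and
`λ = 1` beyond it.
-/

open Finset

/-- The μ-ordinary slope sequence of Lemma B.2 (indexed by `Fin (2 * ((a+b)*r))`,
with `i : Fin _` representing the `(i.val + 1)`-st slope): `0` with multiplicity `2ar`,
`1/2` with multiplicity `2(b-a)r`, and `1` with multiplicity `2ar`. -/
def muOrdinarySlopes (a b r : ℕ) : Fin (2 * ((a + b) * r)) → ℚ :=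
  fun i => if (i : ℕ) < 2 * a * r then 0 else if (i : ℕ) < 2 * b * r then 1 / 2 else 1

lemma Monotone.eq_zero_iff_lt_card_zeros {α : Type*} [PartialOrder α] [Zero α] [DecidableEq α]
    {N : ℕ} {f : Fin N → α} (hf : Monotone f) (h0 : ∀ i, 0 ≤ f i) (i : Fin N) :
    f i = 0 ↔ (i : ℕ) < #{j | f j = 0} := by
  have hdown : ∀ {j j'}, j ≤ j' → f j' = 0 → f j = 0 := fun hjj' hj' =>
    le_antisymm (hj' ▸ hf hjj') (h0 _)
  constructor
  · intro hi
    have hsub : Iic i ⊆ ({j | f j = 0} : Finset _) := fun j hj => by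
      simpa using hdown (mem_Iic.1 hj) hi
    simpa using card_le_card hsub
  · intro hi
    by_contra hne
    have hsub : ({j | f j = 0} : Finset _) ⊆ Iio i := fun j hj => by
      simp only [mem_filter, mem_univ, true_and] at hj
      exact mem_Iio.2 (lt_of_not_ge fun hij => hne (hdown hij hj))
    simpa using (card_le_card hsub).trans_lt' hi

def LiesOnOrAbove {M : Type*} [AddCommMonoid M] [LE M] {N : ℕ} (lam ν : Fin N → M) : Prop :=
  ∀ m : ℕ, 1 ≤ m → m ≤ N →
    ∑ i ∈ univ.filter (fun i : Fin N => (i : ℕ) < m), ν i ≤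
      ∑ i ∈ univ.filter (fun i : Fin N => (i : ℕ) < m), lam i

lemma LiesOnOrAbove.eq_of_le {M : Type*} [AddCommMonoid M] [PartialOrder M]
    [IsOrderedCancelAddMonoid M] {N m : ℕ} {lam ν : Fin N → M} (h : LiesOnOrAbove lam ν)
    (hm : m ≤ N) (hle : ∀ i : Fin N, (i : ℕ) < m → lam i ≤ ν i) {i : Fin N} (hi : (i : ℕ) < m) :
    lam i = ν i := by
  have hsum := h m (by omega) hm
  refine (sum_eq_sum_iff_of_le fun j hj => hle j (mem_filter.1 hj).2).1
    (le_antisymm (sum_le_sum fun j hj => hle j (mem_filter.1 hj).2) hsum) i ?_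
  simpa using hi

section muOrdinary

variable {a b r : ℕ}

lemma muOrdinarySlopes_nonneg (i : Fin (2 * ((a + b) * r))) : 0 ≤ muOrdinarySlopes a b r i := by
  unfold muOrdinarySlopes
  split_ifs <;> norm_num

lemma muOrdinarySlopes_pos {i : Fin (2 * ((a + b) * r))} (hi : 2 * a * r ≤ i) :
    0 < muOrdinarySlopes a b r i := by
  unfold muOrdinarySlopes
  split_ifs <;> first | omega | norm_num

lemma muOrdinarySlopes_eq_half {i : Fin (2 * ((a + b) * r))} (h₁ : 2 * a * r ≤ i)
    (h₂ : (i : ℕ) < 2 * b * r) : muOrdinarySlopes a b r i = 1 / 2 := by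
  unfold muOrdinarySlopes
  rw [if_neg (by omega), if_pos h₂]

variable {lam : Fin (2 * ((a + b) * r)) → ℚ}

lemma LiesOnOrAbove.le_of_eq_zero_iff_lt (habove : LiesOnOrAbove lam (muOrdinarySlopes a b r)) {k : ℕ}
    (hk : k ≤ 2 * ((a + b) * r)) (hzero : ∀ i, lam i = 0 ↔ (i : ℕ) < k) : k ≤ 2 * a * r := by
  by_contra! hlt
  let i₀ : Fin (2 * ((a + b) * r)) := ⟨2 * a * r, by omega⟩
  have heq : lam i₀ = muOrdinarySlopes a b r i₀ :=
    habove.eq_of_le hk (fun i hi => (hzero i).2 hi ▸ muOrdinarySlopes_nonneg i) hlt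
  rw [(hzero i₀).2 hlt] at heq
  exact (muOrdinarySlopes_pos le_rfl).ne heq

lemma LiesOnOrAbove.half_le_of_forall_lt_eq_zero (habove : LiesOnOrAbove lam (muOrdinarySlopes a b r))
    (hmono : Monotone lam) (hzero : ∀ i : Fin _, (i : ℕ) < 2 * a * r → lam i = 0)
    {j : Fin (2 * ((a + b) * r))} (h₁ : 2 * a * r ≤ j) (h₂ : (j : ℕ) < 2 * b * r) :
    1 / 2 ≤ lam j := by
  by_contra! hlt
  have hle : ∀ i : Fin _, (i : ℕ) < j + 1 → lam i ≤ muOrdinarySlopes a b r i := fun i hi => by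
    by_cases hi₀ : (i : ℕ) < 2 * a * r
    · exact (hzero i hi₀).symm ▸ muOrdinarySlopes_nonneg i
    · rw [muOrdinarySlopes_eq_half (by omega) (by omega)]
      exact (hmono (Fin.le_def.2 (by omega))).trans hlt.le
  have heq := habove.eq_of_le (by omega) hle (Nat.lt_succ_self j)
  rw [muOrdinarySlopes_eq_half h₁ h₂] at heq
  exact hlt.ne heq

end muOrdinary

theorem muOrdinary_prop_B_3_cor_B_4_general (a b r : ℕ)
    (lam : Fin (2 * ((a + b) * r)) → ℚ)
    (hmono : Monotone lam)
    (hnonneg : ∀ i, 0 ≤ lam i)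
    (hsymm : ∀ i, lam i + lam i.rev = 1)
    (habove : ∀ m : ℕ, 1 ≤ m → m ≤ 2 * ((a + b) * r) →
      ∑ i ∈ Finset.univ.filter (fun i : Fin (2 * ((a + b) * r)) => (i : ℕ) < m),
          muOrdinarySlopes a b r i ≤
        ∑ i ∈ Finset.univ.filter (fun i : Fin (2 * ((a + b) * r)) => (i : ℕ) < m), lam i) :
    (Finset.univ.filter fun i => lam i = 0).card ≤ 2 * a * r ∧
      ((Finset.univ.filter fun i => lam i = 0).card = 2 * a * r →
        ∀ i, lam i = muOrdinarySlopes a b r i) := by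
  have hzero := hmono.eq_zero_iff_lt_card_zeros hnonneg
  refine ⟨LiesOnOrAbove.le_of_eq_zero_iff_lt habove
    (card_le_univ _ |>.trans_eq (by simp)) hzero, fun hk i => ?_⟩
  rw [hk] at hzero
  have hrev (i : Fin (2 * ((a + b) * r))) : (i.rev : ℕ) + i + 1 = 2 * a * r + 2 * b * r := by
    grind [i.isLt]
  have hhalf {i : Fin _} (h₁ : 2 * a * r ≤ i) (h₂ : (i : ℕ) < 2 * b * r) :=
    LiesOnOrAbove.half_le_of_forall_lt_eq_zero habove hmono (fun i => (hzero i).2) h₁ h₂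
  unfold muOrdinarySlopes
  split_ifs with h₁ h₂
  · exact (hzero i).2 h₁
  · have := hrev i
    linarith [hsymm i, hhalf (not_lt.1 h₁) h₂, hhalf (i := i.rev) (by omega) (by omega)]
  · linarith [hsymm i, (hzero i.rev).2 (by have := hrev i; omega)]

/-- **Combinatorial content of Proposition B.3 and Corollary B.4: the μ-ordinary locus
is the maximal `p`-rank stratum, of `p`-rank `2ar`.**
Let `g = (a+b)r` with `r ≥ 1` and `a < b`, and let `ν` be the μ-ordinary slope sequence
of Lemma B.2.  Let `λ₁ ≤ … ≤ λ_{2g}` be a nondecreasing sequence of nonnegative rational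
numbers which is symmetric (`λ_i + λ_{2g+1−i} = 1` for all `i`) and lies on or above `ν`
(`λ₁ + ⋯ + λ_m ≥ ν₁ + ⋯ + ν_m` for all `1 ≤ m ≤ 2g`).  Then the `p`-rank
`card {i : λ_i = 0}` is at most `2ar`, and if it equals `2ar` then `λ = ν`. -/
theorem muOrdinary_prop_B_3_cor_B_4 (a b r : ℕ) (hr : 1 ≤ r) (hab : a < b)
    (lam : Fin (2 * ((a + b) * r)) → ℚ)
    (hmono : Monotone lam)
    (hnonneg : ∀ i, 0 ≤ lam i)
    (hsymm : ∀ i, lam i + lam i.rev = 1)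
    (habove : ∀ m : ℕ, 1 ≤ m → m ≤ 2 * ((a + b) * r) →
      ∑ i ∈ Finset.univ.filter (fun i : Fin (2 * ((a + b) * r)) => (i : ℕ) < m),
          muOrdinarySlopes a b r i ≤
        ∑ i ∈ Finset.univ.filter (fun i : Fin (2 * ((a + b) * r)) => (i : ℕ) < m), lam i) :
    (Finset.univ.filter fun i => lam i = 0).card ≤ 2 * a * r ∧
      ((Finset.univ.filter fun i => lam i = 0).card = 2 * a * r →
        ∀ i, lam i = muOrdinarySlopes a b r i) :=
  muOrdinary_prop_B_3_cor_B_4_general a b r lam hmono hnonneg hsymm habove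
end
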